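/- arXiv:2307.05146 — 3 statements merged into one kernel-verified Lean document; each statement's English description precedes it below -/
import Mathlib

section
/- A multivariate polynomial with rational coefficients taking integer values on all integer tuples takes p-adic integer values on all tuples of p-adic integers. -/
/-! The polynomial function is continuous on `ℤ_[p]^m` and `ℤ^m` is dense there, so the closed
condition `‖f a‖ ≤ 1`, which holds on integer tuples, holds everywhere. -/

open MvPolynomial

namespace PadicInt

variable {p : ℕ} [Fact p.Prime] {σ : Type*}

theorem denseRange_intCast_pi : DenseRange (fun (a : σ → ℤ) i => (a i : ℤ_[p])) :=
  DenseRange.piMap fun _ => denseRange_intCast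

theorem continuous_eval_coe (g : MvPolynomial σ ℚ_[p]) :
    Continuous fun a : σ → ℤ_[p] => eval (fun i => (a i : ℚ_[p])) g :=
  (continuous_eval g).comp <| continuous_pi fun i => continuous_subtype_val.comp (continuous_apply i)

theorem eval_map_intCast (f : MvPolynomial σ ℚ) (b : σ → ℤ) :
    eval (fun i => ((b i : ℤ_[p]) : ℚ_[p])) (map (algebraMap ℚ ℚ_[p]) f) =
      (eval (fun i => (b i : ℚ)) f : ℚ_[p]) := by
  rw [← eq_ratCast (algebraMap ℚ ℚ_[p]), map_eval]
  congr 1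

end PadicInt

theorem int_valued_mv_polynomial_padic_int_valued
    (p : ℕ) [Fact p.Prime] (m : ℕ) (f : MvPolynomial (Fin m) ℚ)
    (hf : ∀ a : Fin m → ℤ, ∃ z : ℤ,
      MvPolynomial.eval (fun i => (a i : ℚ)) f = (z : ℚ)) :
    ∀ a : Fin m → ℤ_[p],
      ‖MvPolynomial.eval (fun i => (a i : ℚ_[p]))
        (MvPolynomial.map (algebraMap ℚ ℚ_[p]) f)‖ ≤ 1 := by
  intro a
  refine PadicInt.denseRange_intCast_pi.induction_on a
    (isClosed_le (PadicInt.continuous_eval_coe _).norm continuous_const) fun b => ?_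
  obtain ⟨z, hz⟩ := hf b
  simp only [PadicInt.eval_map_intCast, hz, Rat.cast_intCast]
  exact Padic.norm_int_le_one z
end

section
/- Solvability over ℤ of a system of three linear-type congruences modulo p^{α+β} implies exact solvability over ℤ_p: if u,v,w,x,y,z ∈ ℤ with p ∤ u solve the system (i) s₁₃₄v = t₁₂₄u − s₁₂₄ + s₁₂₃w, (ii) s₁₃₄x = t₁₃₅u − s₁₃₅ − s₁₄₅w − s₂₃₅y, (iii) dz = t₁₂₅u² − s₁₂₅ − s₁₂₄x − s₁₃₄vx − s₁₃₅v modulo p^{α+β}, where α = ν_p(d), β = ν_p(s₁₃₄), d = gcd(s₁₂₃, s₁₄₅, s₂₃₅), then the system has an exact solution over ℤ_p with u a unit. -/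
lemma my_isUnit_of_not_dvd (p : ℕ) [Fact p.Prime] (k : ℤ) (h : ¬ (p : ℤ) ∣ k) :
    IsUnit (k : ℤ_[p]) := by
  rw [PadicInt.isUnit_iff]
  refine le_antisymm (PadicInt.norm_le_one _) ?_
  by_contra hlt
  exact h ((PadicInt.norm_int_lt_one_iff_dvd k).1 (lt_of_not_ge hlt))

theorem approx_solution_implies_exact_padic_solution
    (p : ℕ) [Fact p.Prime]
    (s123 s124 s125 s134 s135 s145 s235 t124 t125 t135 : ℤ)
    (h123 : 0 < s123) (h134 : 0 < s134) (h145 : 0 < s145)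
    (d : ℕ) (hd : d = Int.gcd s123 (Int.gcd s145 s235))
    (α β : ℕ) (hα : α = padicValNat p d) (hβ : β = padicValInt p s134)
    (u v w x y z : ℤ) (hu : ¬ (p : ℤ) ∣ u)
    (h1 : (p : ℤ) ^ (α + β) ∣ (s134 * v - (t124 * u - s124 + s123 * w)))
    (h2 : (p : ℤ) ^ (α + β) ∣ (s134 * x - (t135 * u - s135 - s145 * w - s235 * y)))
    (h3 : (p : ℤ) ^ (α + β) ∣
        ((d : ℤ) * z - (t125 * u ^ 2 - s125 - s124 * x - s134 * v * x - s135 * v))) :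
    ∃ u' v' w' x' y' z' : ℤ_[p], IsUnit u' ∧
      (s134 : ℤ_[p]) * v' = (t124 : ℤ_[p]) * u' - (s124 : ℤ_[p]) + (s123 : ℤ_[p]) * w' ∧
      (s134 : ℤ_[p]) * x' = (t135 : ℤ_[p]) * u' - (s135 : ℤ_[p]) - (s145 : ℤ_[p]) * w'
        - (s235 : ℤ_[p]) * y' ∧
      (d : ℤ_[p]) * z' = (t125 : ℤ_[p]) * u' ^ 2 - (s125 : ℤ_[p]) - (s124 : ℤ_[p]) * x'
        - (s134 : ℤ_[p]) * v' * x' - (s135 : ℤ_[p]) * v' := by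
  have hs134_ne : s134 ≠ 0 := h134.ne'
  have hd_pos : 0 < d := by
    rw [hd]; exact Int.gcd_pos_of_ne_zero_left _ h123.ne'
  -- factor s134 = p^β * m with p ∤ m
  obtain ⟨m, hm⟩ : (p : ℤ) ^ β ∣ s134 := by rw [hβ]; exact padicValInt_dvd s134
  have hpm : ¬ (p : ℤ) ∣ m := by
    intro ⟨c, hc⟩
    have : (p : ℤ) ^ (β + 1) ∣ s134 := ⟨c, by rw [hm, hc]; ring⟩
    rcases (padicValInt_dvd_iff _ _).1 this with h | h
    · exact hs134_ne h
    · omega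
  -- factor d = p^α * e with p ∤ e
  obtain ⟨e, he⟩ : p ^ α ∣ d := by rw [hα]; exact pow_padicValNat_dvd
  have hpe : ¬ (p : ℤ) ∣ (e : ℤ) := by
    rw [Int.natCast_dvd_natCast]
    intro ⟨c, hc⟩
    have : p ^ (α + 1) ∣ d := ⟨c, by rw [he, hc]; ring⟩
    rcases (padicValNat_dvd_iff _ _).1 this with h | h
    · omega
    · omega
  -- units in ℤ_[p]
  obtain ⟨Mi, hMi⟩ := (my_isUnit_of_not_dvd p m hpm).exists_right_inv
  obtain ⟨Ei, hEi⟩ := (my_isUnit_of_not_dvd p (e : ℤ) hpe).exists_right_inv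
  set P : ℤ_[p] := (p : ℤ_[p]) with hP
  have hs134' : (s134 : ℤ_[p]) = P ^ β * (m : ℤ_[p]) := by
    rw [hm]; push_cast; ring
  have hd' : (d : ℤ_[p]) = P ^ α * (e : ℤ_[p]) := by
    rw [he]; push_cast; ring
  obtain ⟨k1, hk1⟩ := h1
  obtain ⟨k2, hk2⟩ := h2
  obtain ⟨k3, hk3⟩ := h3
  have hc1 : (s134 : ℤ_[p]) * v - ((t124 : ℤ_[p]) * u - s124 + s123 * w)
      = P ^ (α + β) * k1 := by
    have h := congrArg (fun t : ℤ => (t : ℤ_[p])) hk1; push_cast at h; linear_combination h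
  have hc2 : (s134 : ℤ_[p]) * x - ((t135 : ℤ_[p]) * u - s135 - s145 * w - s235 * y)
      = P ^ (α + β) * k2 := by
    have h := congrArg (fun t : ℤ => (t : ℤ_[p])) hk2; push_cast at h; linear_combination h
  have hc3 : (d : ℤ_[p]) * z - ((t125 : ℤ_[p]) * u ^ 2 - s125 - s124 * x
      - s134 * v * x - s135 * v) = P ^ (α + β) * k3 := by
    have h := congrArg (fun t : ℤ => (t : ℤ_[p])) hk3; push_cast at h; linear_combination h
  set K1 : ℤ_[p] := (k1 : ℤ_[p])
  set K2 : ℤ_[p] := (k2 : ℤ_[p])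
  set K3 : ℤ_[p] := (k3 : ℤ_[p])
  refine ⟨(u : ℤ_[p]), (v : ℤ_[p]) - P ^ α * K1 * Mi, (w : ℤ_[p]),
    (x : ℤ_[p]) - P ^ α * K2 * Mi, (y : ℤ_[p]),
    (z : ℤ_[p]) + Ei * ((s124 : ℤ_[p]) * K2 * Mi + (s135 : ℤ_[p]) * K1 * Mi
      + P ^ β * K1 * x + P ^ β * K2 * v - P ^ (α + β) * K1 * K2 * Mi - P ^ β * K3),
    my_isUnit_of_not_dvd p u hu, ?_, ?_, ?_⟩
  · rw [hs134'] at hc1 ⊢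
    linear_combination hc1 - (P ^ (α + β) * K1) * hMi
  · rw [hs134'] at hc2 ⊢
    linear_combination hc2 - (P ^ (α + β) * K2) * hMi
  · rw [hs134'] at hc3 ⊢
    rw [hd'] at hc3 ⊢
    linear_combination hc3 + (P ^ α * ((s124 : ℤ_[p]) * K2 * Mi + (s135 : ℤ_[p]) * K1 * Mi
      + P ^ β * K1 * x + P ^ β * K2 * v - P ^ (α + β) * K1 * K2 * Mi - P ^ β * K3)) * (by exact_mod_cast hEi : (e : ℤ_[p]) * Ei = 1)
      + (P ^ α * P ^ (α + β) * Mi * K1 * K2 - P ^ (α + β) * (v * K2 + x * K1)) * hMi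
end

section
/- The map sending integer parameters (u,v,w,x,y,z) with u a unit to the transformation of triples (t₁₂₄, t₁₃₅, t₁₂₅) defined by the three equations t₁₂₄u = s₁₂₄ − s₁₂₃w + s₁₃₄v, t₁₃₅u = s₁₃₅ + s₁₄₅w + s₁₃₄x + s₂₃₅y, t₁₂₅u² = s₁₂₅ + s₁₃₅v + s₁₂₄x + s₁₃₄vx + d₃(s)z defines an equivalence relation on tuples (when s and t have equal fixed coordinates s₁₂₃=t₁₂₃, s₁₃₄=t₁₃₄, s₁₄₅=t₁₄₅, s₂₃₅=t₂₃₅). -/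
theorem type_2111_relation_is_equivalence
    (R : Type*) [CommRing R]
    (s123 s134 s145 s235 : ℤ) (h123 : 0 < s123) (h134 : 0 < s134)
    (h145 : 0 < s145) (h235 : 0 ≤ s235)
    (d3 : ℕ) (hd3 : d3 = Int.gcd s123 (Int.gcd s145 s235)) :
    Equivalence (fun s t : R × R × R =>
      ∃ (u : Rˣ) (v w x y z : R),
        t.1 * (u : R) = s.1 - (s123 : R) * w + (s134 : R) * v ∧
        t.2.1 * (u : R) = s.2.1 + (s145 : R) * w + (s134 : R) * x + (s235 : R) * y ∧
        t.2.2 * (u : R) ^ 2 = s.2.2 + s.2.1 * v + s.1 * x + (s134 : R) * v * x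
          + (d3 : R) * z) := by
  have hcZ : (d3 : ℤ) ∣ s123 := by rw [hd3]; exact Int.gcd_dvd_left ..
  have haZ : (d3 : ℤ) ∣ s145 := by
    rw [hd3]; exact dvd_trans (Int.gcd_dvd_right ..) (Int.gcd_dvd_left ..)
  have hbZ : (d3 : ℤ) ∣ s235 := by
    rw [hd3]; exact dvd_trans (Int.gcd_dvd_right ..) (Int.gcd_dvd_right ..)
  obtain ⟨A, hA⟩ := haZ
  obtain ⟨B, hB⟩ := hbZ
  obtain ⟨C, hC⟩ := hcZ
  have hAR : (s145 : R) = (d3 : R) * (A : R) := by exact_mod_cast congrArg (Int.cast : ℤ → R) hA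
  have hBR : (s235 : R) = (d3 : R) * (B : R) := by exact_mod_cast congrArg (Int.cast : ℤ → R) hB
  have hCR : (s123 : R) = (d3 : R) * (C : R) := by exact_mod_cast congrArg (Int.cast : ℤ → R) hC
  constructor
  · intro s
    exact ⟨1, 0, 0, 0, 0, 0, by simp, by simp, by simp⟩
  · rintro s t ⟨u, v, w, x, y, z, h1, h2, h3⟩
    have hu : (u : R) * ((u⁻¹ : Rˣ) : R) = 1 := u.mul_inv
    set U : R := ((u⁻¹ : Rˣ) : R) with hU
    refine ⟨u⁻¹, -v * U, -w * U, -x * U, -y * U,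
      ((A : R) * (w * v) + (B : R) * (y * v) - (C : R) * (w * x) - z) * U ^ 2, ?_, ?_, ?_⟩
    · linear_combination (-U) * h1 + t.1 * hu
    · linear_combination (-U) * h2 + t.2.1 * hu
    · linear_combination (-(U ^ 2)) * h3 + (v * U ^ 2) * h2 + (x * U ^ 2) * h1
        + (t.2.2 * ((u : R) * U + 1) - (t.2.1 * v + t.1 * x) * U) * hu
        + (w * v * U ^ 2) * hAR + (y * v * U ^ 2) * hBR - (w * x * U ^ 2) * hCR
  · rintro s t r ⟨u, v, w, x, y, z, h1, h2, h3⟩ ⟨u', v', w', x', y', z', h1', h2', h3'⟩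
    refine ⟨u * u', v + v' * (u : R), w + w' * (u : R), x + x' * (u : R), y + y' * (u : R),
      z + z' * (u : R) ^ 2 + ((A : R) * (w * v') + (B : R) * (y * v') - (C : R) * (w * x')) * (u : R),
      ?_, ?_, ?_⟩
    · simp only [Units.val_mul]
      linear_combination (u : R) * h1' + h1
    · simp only [Units.val_mul]
      linear_combination (u : R) * h2' + h2
    · simp only [Units.val_mul]
      linear_combination (u : R) ^ 2 * h3' + h3 + (v' * (u : R)) * h2 + (x' * (u : R)) * h1
        + (w * v' * (u : R)) * hAR + (y * v' * (u : R)) * hBR - (w * x' * (u : R)) * hCR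
end
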